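/- For a prime p, the ring R = (ℤ/p²ℤ)[X] is not a Rado ring: the 3×3 matrix with rows (1,1,−1), (0,p,0), (0,0,p) is partition regular over R but does not satisfy the generalised columns condition over R. -/

import Mathlib

open BigOperators

/-- A matrix `A` over `S` is partition regular over the `S`-module `M` for `r` colours if
every colouring of `M` with `r` colours admits a nonzero monochromatic solution of `A m = 0`. -/
def IsPR {S : Type*} [CommRing S] {k l : ℕ} (A : Matrix (Fin k) (Fin l) S)
    (M : Type*) [AddCommGroup M] [Module S M] (r : ℕ) : Prop :=
  ∀ χ : M → Fin r, ∃ m : Fin l → M, m ≠ 0 ∧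
    (∀ i, ∑ j, A i j • m j = 0) ∧ ∀ j j', χ (m j) = χ (m j')

/-- Partition regularity for every (positive) finite number of colours. -/
def IsPRAll {S : Type*} [CommRing S] {k l : ℕ} (A : Matrix (Fin k) (Fin l) S)
    (M : Type*) [AddCommGroup M] [Module S M] : Prop :=
  ∀ r : ℕ, 1 ≤ r → IsPR A M r

/-- The generalised columns condition of Bergelson--Deuber--Hindman--Lefmann. -/
def GenColumnsCondition {R : Type*} [CommRing R] {k l : ℕ}
    (A : Matrix (Fin k) (Fin l) R) : Prop :=
  ∃ (m : ℕ) (I : Fin (m + 1) → Finset (Fin l)) (d : Fin (m + 1) → R),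
    (∀ t, (I t).Nonempty) ∧
    (∀ t t', t ≠ t' → Disjoint (I t) (I t')) ∧
    (∀ j : Fin l, ∃ t, j ∈ I t) ∧
    (∀ t, d t ≠ 0) ∧
    (∀ i : Fin k, d 0 * ∑ j ∈ I 0, A i j = 0) ∧
    (∀ t : Fin (m + 1), 0 < t →
      (fun i : Fin k => d t * ∑ j ∈ I t, A i j) ∈
        Submodule.span R
          ((fun j (i : Fin k) => A i j) '' {j | ∃ t', t' < t ∧ j ∈ I t'})) ∧
    (0 < m → ∀ n : ℕ,
      (Set.range fun r : R =>
        d 0 * (∏ t ∈ Finset.univ.filter (fun t => t ≠ 0), d t) ^ n * r).Infinite)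

/-- A ring is a Rado ring if partition regularity over it is equivalent to the
generalised columns condition, for every matrix. -/
def IsRadoRing (R : Type*) [CommRing R] : Prop :=
  ∀ (k l : ℕ) (A : Matrix (Fin k) (Fin l) R), IsPRAll A R ↔ GenColumnsCondition A

/-!
The columns of `A = !![1, 1, -1; 0, p, 0; 0, 0, p]` satisfy `B * A = p • 1` for
`B = !![p, -1, 1; 0, 1, 0; 0, 0, 1]`. Applying `B` to the conditions that the generalised
columns condition imposes on its first two blocks `I₀`, `I₁` shows that `d₀ * p = 0` and
`d₁ * p = 0`. The annihilator of `p` in `(ZMod (p ^ 2))[X]` is `p • (ZMod (p ^ 2))[X]`, whose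
square is zero, so `d₀ * d₁ = 0` and the infinitude requirement fails. Partition regularity comes
from Hindman's theorem applied to the sequence `p * X ^ n`: its finite sums are nonzero and
killed by `p`, and a monochromatic Schur triple `x, y, x + y` among them gives the solution
`(y, x, x + y)`.
-/

open Polynomial

namespace ZMod

theorem natCast_dvd_of_mul_natCast_eq_zero {n : ℕ} [NeZero n] {x : ZMod (n ^ 2)}
    (hx : x * n = 0) : (n : ZMod (n ^ 2)) ∣ x := by
  have hdvd : n * n ∣ x.val * n := by
    rw [← sq, ← ZMod.natCast_eq_zero_iff]
    push_cast
    rwa [ZMod.natCast_zmod_val]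
  obtain ⟨a, ha⟩ := (Nat.mul_dvd_mul_iff_right (Nat.pos_of_neZero n)).mp hdvd
  refine ⟨a, ?_⟩
  rw [← ZMod.natCast_zmod_val x, ha]
  push_cast
  ring

theorem natCast_mul_self_eq_zero (n : ℕ) : (n : ZMod (n ^ 2)) * n = 0 := by
  rw [← Nat.cast_mul, ← sq, ZMod.natCast_self]

theorem natCast_ne_zero_of_one_lt {n : ℕ} (hn : 1 < n) : (n : ZMod (n ^ 2)) ≠ 0 := by
  rw [Ne, ZMod.natCast_eq_zero_iff]
  intro h
  have := (Nat.pow_dvd_pow_iff_le_right hn).mp (by simpa using h : n ^ 2 ∣ n ^ 1)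
  omega

theorem mul_eq_zero_of_mul_natCast_eq_zero {n : ℕ} [NeZero n] {x y : ZMod (n ^ 2)}
    (hx : x * n = 0) (hy : y * n = 0) : x * y = 0 := by
  obtain ⟨a, rfl⟩ := natCast_dvd_of_mul_natCast_eq_zero hx
  obtain ⟨b, rfl⟩ := natCast_dvd_of_mul_natCast_eq_zero hy
  rw [mul_mul_mul_comm, natCast_mul_self_eq_zero, zero_mul]

end ZMod

namespace Polynomial

variable {S : Type*} [CommSemiring S]

theorem mul_eq_zero_of_mul_C_eq_zero {c : S}
    (hS : ∀ x y : S, x * c = 0 → y * c = 0 → x * y = 0) {f g : S[X]}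
    (hf : f * C c = 0) (hg : g * C c = 0) : f * g = 0 := by
  have hcoeff : ∀ {h : S[X]}, h * C c = 0 → ∀ n, h.coeff n * c = 0 := fun hh n => by
    rw [← coeff_mul_C, hh, coeff_zero]
  ext n
  rw [coeff_mul, coeff_zero]
  exact Finset.sum_eq_zero fun x _ => hS _ _ (hcoeff hf x.1) (hcoeff hg x.2)

theorem sum_C_mul_X_pow_ne_zero {c : S} (hc : c ≠ 0) {F : Finset ℕ} (hF : F.Nonempty) :
    ∑ i ∈ F, C c * X ^ i ≠ 0 := by
  obtain ⟨i₀, hi₀⟩ := hF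
  intro h
  have hcoeff := congrArg (coeff · i₀) h
  simp only [finsetSum_coeff, coeff_C_mul_X_pow, Finset.sum_ite_eq, if_pos hi₀,
    coeff_zero] at hcoeff
  exact hc hcoeff

end Polynomial

namespace Hindman

theorem exists_finset_sum_eq_of_mem_FS {M : Type*} [AddCommMonoid M] {a : Stream' M}
    {m : M} (hm : m ∈ FS a) : ∃ F : Finset ℕ, F.Nonempty ∧ ∑ i ∈ F, a.get i = m := by
  induction hm with
  | head' a => exact ⟨{0}, Finset.singleton_nonempty 0, Finset.sum_singleton _ _⟩
  | tail' a m _ ih =>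
    obtain ⟨F, hF, rfl⟩ := ih
    exact ⟨F.map ⟨Nat.succ, Nat.succ_injective⟩, hF.map, Finset.sum_map _ _ _⟩
  | cons' a m _ ih =>
    obtain ⟨F, _, rfl⟩ := ih
    refine ⟨insert 0 (F.map ⟨Nat.succ, Nat.succ_injective⟩), Finset.insert_nonempty _ _, ?_⟩
    rw [Finset.sum_insert (by simp), Finset.sum_map]
    rfl

theorem exists_monochromatic_add_mem_FS {M κ : Type*} [AddSemigroup M] [Finite κ]
    (a : Stream' M) (χ : M → κ) :
    ∃ x y, x ∈ FS a ∧ y ∈ FS a ∧ x + y ∈ FS a ∧ χ y = χ x ∧ χ (x + y) = χ x := by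
  obtain ⟨_, ⟨i, rfl⟩, b, hb⟩ := FS_partition_regular a
    (Set.range fun i => χ ⁻¹' {i} ∩ FS a) (Set.finite_range _)
    (fun m hm => Set.mem_sUnion.mpr ⟨_, ⟨χ m, rfl⟩, rfl, hm⟩)
  have h₀ := hb (FS.singleton b 0)
  have h₁ := hb (FS.singleton b 1)
  have h₀₁ := hb (FS.add_two b 0 1 zero_lt_one)
  exact ⟨_, _, h₀.2, h₁.2, h₀₁.2, h₁.1.trans h₀.1.symm, h₀₁.1.trans h₀.1.symm⟩

end Hindman

section GenColumnsCondition

variable {R : Type*} [CommRing R]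

theorem mul_eq_zero_of_smul_sum_col_mem_span {ι κ : Type*} [Fintype ι] [DecidableEq κ]
    {A : Matrix ι κ R} {B : Matrix κ ι R} {c : R} (hBA : B * A = c • 1)
    {J : Finset κ} {K : Set κ} {j : κ} (hjJ : j ∈ J) (hjK : j ∉ K) {d : R}
    (hd : (fun i => d * ∑ j' ∈ J, A i j') ∈
      Submodule.span R ((fun j' i => A i j') '' K)) : d * c = 0 := by
  let φ : (ι → R) →ₗ[R] R := (LinearMap.proj j).comp B.mulVecLin
  have hφ : ∀ j', φ (fun i => A i j') = (c • 1 : Matrix κ κ R) j j' := fun j' => by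
    rw [← hBA, Matrix.mul_apply]
    rfl
  have hker : Submodule.span R ((fun j' i => A i j') '' K) ≤ LinearMap.ker φ := by
    rw [Submodule.span_le]
    rintro _ ⟨j', hj', rfl⟩
    have hne : j ≠ j' := fun h => hjK (h ▸ hj')
    simp [hφ, hne]
  have := LinearMap.mem_ker.mp (hker hd)
  have hv : (fun i => d * ∑ j' ∈ J, A i j') = d • ∑ j' ∈ J, fun i => A i j' := by
    ext i; simp [Finset.sum_apply]
  rw [hv, map_smul, map_sum] at this
  simpa [hφ, Matrix.one_apply, hjJ] using this

theorem not_genColumnsCondition_of_mul_eq_smul_one {k l : ℕ} {A : Matrix (Fin k) (Fin l) R}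
    {B : Matrix (Fin l) (Fin k) R} {c : R} (hBA : B * A = c • 1)
    (hrow : ∃ i, IsUnit (∑ j, A i j))
    (hann : ∀ x y : R, x * c = 0 → y * c = 0 → x * y = 0) : ¬ GenColumnsCondition A := by
  rintro ⟨m, I, d, hne, hdisj, hcov, hd, hfirst, hspan, hinf⟩
  rcases Nat.eq_zero_or_pos m with rfl | hm
  · obtain ⟨i, hi⟩ := hrow
    have hI : I 0 = Finset.univ := Finset.eq_univ_of_forall fun j => by
      obtain ⟨t, ht⟩ := hcov j
      rwa [show t = 0 from Fin.ext (by omega)] at ht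
    exact hd 0 (hi.mul_left_eq_zero.mp (hI ▸ hfirst i))
  · obtain ⟨j₀, hj₀⟩ := hne 0
    have hd₀ : d 0 * c = 0 := mul_eq_zero_of_smul_sum_col_mem_span hBA hj₀
      (Set.notMem_empty j₀) (by rw [funext hfirst]; exact zero_mem _)
    let t₁ : Fin (m + 1) := ⟨1, by omega⟩
    have ht₁ : t₁ ≠ 0 := by simp [t₁, Fin.ext_iff]
    obtain ⟨j₁, hj₁⟩ := hne t₁
    have hd₁ : d t₁ * c = 0 := by
      refine mul_eq_zero_of_smul_sum_col_mem_span hBA hj₁ ?_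
        (hspan t₁ (Fin.pos_of_ne_zero ht₁))
      rintro ⟨t', ht', hj'⟩
      have : t' = 0 := Fin.ext (by simp [t₁, Fin.lt_def] at ht'; omega)
      exact Finset.disjoint_left.mp (hdisj t₁ 0 ht₁) hj₁ (this ▸ hj')
    refine hinf hm 1 ((Set.finite_singleton 0).subset ?_)
    rintro _ ⟨r, rfl⟩
    rw [pow_one, ← Finset.mul_prod_erase _ _ (by simpa using ht₁), ← mul_assoc,
      hann _ _ hd₀ hd₁, zero_mul]
    exact zero_mul r

end GenColumnsCondition

section SchurAnnMatrix

variable {R : Type*} [CommRing R]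

def schurAnnMatrix (c : R) : Matrix (Fin 3) (Fin 3) R :=
  !![1, 1, -1; 0, c, 0; 0, 0, c]

theorem isPRAll_schurAnnMatrix {M : Type*} [AddCommGroup M] [Module R M] (c : R)
    (a : ℕ → M) (ha : ∀ n, c • a n = 0)
    (hsum : ∀ F : Finset ℕ, F.Nonempty → ∑ i ∈ F, a i ≠ 0) :
    IsPRAll (schurAnnMatrix c) M := by
  intro r _ χ
  have hFS : ∀ z ∈ Hindman.FS a, z ≠ 0 ∧ c • z = 0 := fun z hz => by
    obtain ⟨F, hF, rfl⟩ := Hindman.exists_finset_sum_eq_of_mem_FS hz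
    exact ⟨hsum F hF, by rw [Finset.smul_sum]; exact Finset.sum_eq_zero fun i _ => ha i⟩
  obtain ⟨x, y, hx, hy, hxy, hχy, hχxy⟩ := Hindman.exists_monochromatic_add_mem_FS a χ
  refine ⟨![y, x, x + y], fun h => (hFS x hx).1 (congrFun h 1), fun i => ?_, fun j j' => ?_⟩
  · fin_cases i <;> simp [schurAnnMatrix, Fin.sum_univ_three, (hFS x hx).2, (hFS _ hxy).2]
  · have hχ : ∀ j, χ (![y, x, x + y] j) = χ x := by
      intro j; fin_cases j <;> simp [hχy, hχxy]
    rw [hχ, hχ]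

theorem not_genColumnsCondition_schurAnnMatrix {c : R}
    (hann : ∀ x y : R, x * c = 0 → y * c = 0 → x * y = 0) :
    ¬ GenColumnsCondition (schurAnnMatrix c) := by
  refine not_genColumnsCondition_of_mul_eq_smul_one (B := !![c, -1, 1; 0, 1, 0; 0, 0, 1])
    ?_ ⟨0, by simp [schurAnnMatrix, Fin.sum_univ_three]⟩ hann
  ext i j
  fin_cases i <;> fin_cases j <;> simp [schurAnnMatrix, Matrix.mul_apply, Fin.sum_univ_three]

end SchurAnnMatrix

theorem zmodPSq_poly_not_radoRing (p : ℕ) [Fact p.Prime] :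
    ¬ IsRadoRing (Polynomial (ZMod (p ^ 2))) ∧
      IsPRAll
        (!![(1 : Polynomial (ZMod (p ^ 2))), 1, -1; 0, (p : Polynomial (ZMod (p ^ 2))), 0;
            0, 0, (p : Polynomial (ZMod (p ^ 2)))])
        (Polynomial (ZMod (p ^ 2))) ∧
      ¬ GenColumnsCondition
        (!![(1 : Polynomial (ZMod (p ^ 2))), 1, -1; 0, (p : Polynomial (ZMod (p ^ 2))), 0;
            0, 0, (p : Polynomial (ZMod (p ^ 2)))]) := by
  have hp : p.Prime := Fact.out
  have hC : (p : (ZMod (p ^ 2))[X]) = C (p : ZMod (p ^ 2)) := (C_eq_natCast p).symm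
  have hPR : IsPRAll (schurAnnMatrix (p : (ZMod (p ^ 2))[X])) (ZMod (p ^ 2))[X] := by
    refine isPRAll_schurAnnMatrix _ (fun n => C (p : ZMod (p ^ 2)) * X ^ n) (fun n => ?_)
      (fun F hF => sum_C_mul_X_pow_ne_zero (ZMod.natCast_ne_zero_of_one_lt hp.one_lt) hF)
    rw [smul_eq_mul, hC, ← mul_assoc, ← C_mul, ZMod.natCast_mul_self_eq_zero, C_0, zero_mul]
  have hGCC : ¬ GenColumnsCondition (schurAnnMatrix (p : (ZMod (p ^ 2))[X])) :=
    not_genColumnsCondition_schurAnnMatrix fun f g hf hg =>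
      mul_eq_zero_of_mul_C_eq_zero (fun _ _ => ZMod.mul_eq_zero_of_mul_natCast_eq_zero)
        (hC ▸ hf) (hC ▸ hg)
  exact ⟨fun h => hGCC ((h 3 3 _).mp hPR), hPR, hGCC⟩
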